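/- arXiv:2404.06985 — 7 statements merged into one kernel-verified Lean document; each statement's English description precedes it below -/
import Mathlib

section
/- Let X ⊆ ℝ^n, U ⊆ ℝ^m, X₀ ⊆ X and X₁ ⊆ X, and let f : ℝ^n × ℝ^m → ℝ^n. Suppose v : ℝ^n → ℝ is continuously differentiable and satisfies: v(x) ≤ 0 for all x ∈ X₁; v(x) > 0 for all x ∈ X₀; and ⟨f(x,u), ∇v(x)⟩ ≥ 0 for all x ∈ X and u ∈ U. Then for every differentiable curve x : [0,∞) → ℝ^n and every function u : [0,∞) → U such that x(0) ∈ X₀, x(t) ∈ X for all t ≥ 0, and x'(t) = f(x(t), u(t)) for all t ≥ 0, it holds that x(t) ∉ X₁ for all t ≥ 0. -/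
open Set
open scoped RealInnerProductSpace

section

variable {E : Type*} [NormedAddCommGroup E] [InnerProductSpace ℝ E] [CompleteSpace E]

theorem HasGradientAt.comp_hasDerivWithinAt {v : E → ℝ} {g : E} {x : ℝ → E} {x' : E}
    {s : Set ℝ} {t : ℝ} (hv : HasGradientAt v g (x t)) (hx : HasDerivWithinAt x x' s t) :
    HasDerivWithinAt (v ∘ x) ⟪x', g⟫ s t := by
  have := hv.hasFDerivAt.comp_hasDerivWithinAt t hx
  exact this.congr_deriv (by simp [real_inner_comm])

theorem monotoneOn_comp_of_inner_gradient_nonneg {v : E → ℝ} {x x' : ℝ → E} {a : ℝ}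
    (hv : ∀ t, a ≤ t → DifferentiableAt ℝ v (x t))
    (hx : ∀ t, a ≤ t → HasDerivWithinAt x (x' t) (Ici a) t)
    (hnonneg : ∀ t, a < t → 0 ≤ ⟪x' t, gradient v (x t)⟫) :
    MonotoneOn (v ∘ x) (Ici a) := by
  have hcont : ContinuousOn (v ∘ x) (Ici a) := fun t ht =>
    (hv t ht).continuousAt.comp_continuousWithinAt (hx t ht).continuousWithinAt
  refine monotoneOn_of_hasDerivWithinAt_nonneg (f' := fun t => ⟪x' t, gradient v (x t)⟫)
    (convex_Ici a) hcont (fun t ht => ?_) ?_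
  · rw [interior_Ici] at ht ⊢
    exact (hv t ht.le).hasGradientAt.comp_hasDerivWithinAt ((hx t ht.le).mono Ioi_subset_Ici_self)
  · rw [interior_Ici]
    exact hnonneg

end

theorem barrier_certificate_safety_general {n m : ℕ}
    (X X₀ X₁ : Set (EuclideanSpace ℝ (Fin n)))
    (U : Set (EuclideanSpace ℝ (Fin m)))
    (f : EuclideanSpace ℝ (Fin n) × EuclideanSpace ℝ (Fin m) → EuclideanSpace ℝ (Fin n))
    (v : EuclideanSpace ℝ (Fin n) → ℝ)
    (hv : ContDiff ℝ 1 v)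
    (hv₁ : ∀ x ∈ X₁, v x ≤ 0)
    (hv₀ : ∀ x ∈ X₀, 0 < v x)
    (hlie : ∀ x ∈ X, ∀ u ∈ U, 0 ≤ ⟪f (x, u), gradient v x⟫) :
    ∀ (x : ℝ → EuclideanSpace ℝ (Fin n)) (u : ℝ → EuclideanSpace ℝ (Fin m)),
      (∀ t, 0 ≤ t → u t ∈ U) →
      x 0 ∈ X₀ →
      (∀ t, 0 ≤ t → x t ∈ X) →
      (∀ t, 0 ≤ t → HasDerivWithinAt x (f (x t, u t)) (Set.Ici 0) t) →
      ∀ t, 0 ≤ t → x t ∉ X₁ := by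
  intro x u hu hx₀ hxX hderiv t ht hx₁
  have hmono : MonotoneOn (v ∘ x) (Ici 0) :=
    monotoneOn_comp_of_inner_gradient_nonneg (fun s _ => hv.differentiable one_ne_zero (x s))
      hderiv (fun s hs => hlie _ (hxX s hs.le) _ (hu s hs.le))
  have hle : v (x 0) ≤ v (x t) := hmono self_mem_Ici ht ht
  linarith [hv₀ _ hx₀, hv₁ _ hx₁]

/-- Barrier certificate sufficiency (Theorem 1 of Prajna–Jadbabaie):
a C¹ function `v` positive on `X₀`, nonpositive on `X₁`, and with
`⟨f(x,u), ∇v(x)⟩ ≥ 0` on `X × U` certifies that no admissible trajectory of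
`ẋ = f(x,u)` starting in `X₀` and staying in `X` ever reaches `X₁`. -/
theorem barrier_certificate_safety {n m : ℕ}
    (X X₀ X₁ : Set (EuclideanSpace ℝ (Fin n)))
    (U : Set (EuclideanSpace ℝ (Fin m)))
    (hX₀X : X₀ ⊆ X) (hX₁X : X₁ ⊆ X)
    (f : EuclideanSpace ℝ (Fin n) × EuclideanSpace ℝ (Fin m) → EuclideanSpace ℝ (Fin n))
    (v : EuclideanSpace ℝ (Fin n) → ℝ)
    (hv : ContDiff ℝ 1 v)
    (hv₁ : ∀ x ∈ X₁, v x ≤ 0)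
    (hv₀ : ∀ x ∈ X₀, 0 < v x)
    (hlie : ∀ x ∈ X, ∀ u ∈ U, 0 ≤ ⟪f (x, u), gradient v x⟫) :
    ∀ (x : ℝ → EuclideanSpace ℝ (Fin n)) (u : ℝ → EuclideanSpace ℝ (Fin m)),
      (∀ t, 0 ≤ t → u t ∈ U) →
      x 0 ∈ X₀ →
      (∀ t, 0 ≤ t → x t ∈ X) →
      (∀ t, 0 ≤ t → HasDerivWithinAt x (f (x t, u t)) (Set.Ici 0) t) →
      ∀ t, 0 ≤ t → x t ∉ X₁ :=
  barrier_certificate_safety_general X X₀ X₁ U f v hv hv₁ hv₀ hlie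
end

section
/- Let T > 0, let X₀, X₁, X ⊆ ℝ^n and U ⊆ ℝ^n be sets, and suppose there exists a continuously differentiable function v : ℝ × ℝ^n → ℝ such that v(0,x) ≥ 1 for all x ∈ X₀, v(T,x) ≤ 0 for all x ∈ X₁, and ∂_t v(t,x) + ⟨u, ∇_x v(t,x)⟩ ≥ 0 for all (t,x,u) ∈ [0,T] × X × U. Then there do not exist a Borel probability measure μ₀ supported in X₀, a finite Borel measure μ_T supported in X₁, and a finite Borel measure μ supported in [0,T] × X × U such that for every continuously differentiable w : ℝ × ℝ^n → ℝ, ∫ w(T,x) dμ_T(x) = ∫ w(0,x) dμ₀(x) + ∫ (∂_t w(t,x) + ⟨u, ∇_x w(t,x)⟩) dμ(t,x,u). -/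
open MeasureTheory

/-! Pair the barrier with the weak Liouville equation: the terminal term is `≤ 0`, the occupation
term is `≥ 0` and the initial term is `≥ 1`, which is absurd. Since the equation carries no
integrability assumptions, it is tested against the bounded barrier `arctan ∘ v` instead of `v`:
it has the same sign pattern, with `arctan 1 > 0` in place of `1`, and is `μ₀`-integrable. -/

namespace Real

lemma abs_arctan_le (x : ℝ) : |arctan x| ≤ π / 2 :=
  abs_le.2 ⟨(neg_pi_div_two_lt_arctan x).le, (arctan_lt_pi_div_two x).le⟩

lemma integrable_arctan_comp {α : Type*} [MeasurableSpace α] {μ : Measure α} [IsFiniteMeasure μ]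
    {f : α → ℝ} (hf : AEStronglyMeasurable f μ) : Integrable (fun x => arctan (f x)) μ :=
  .of_bound (continuous_arctan.comp_aestronglyMeasurable hf) (π / 2)
    (.of_forall fun x => abs_arctan_le (f x))

lemma fderiv_arctan_comp_apply_nonneg {E : Type*} [NormedAddCommGroup E] [NormedSpace ℝ E]
    {f : E → ℝ} {x d : E} (hf : DifferentiableAt ℝ f x) (h : 0 ≤ fderiv ℝ f x d) :
    0 ≤ fderiv ℝ (fun y => arctan (f y)) x d := by
  rw [fderiv_arctan hf]
  exact mul_nonneg (by positivity) h

end Real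

theorem barrier_implies_measure_LP_infeasible_general {n : ℕ} (T : ℝ)
    (X₀ X₁ X U : Set (EuclideanSpace ℝ (Fin n)))
    (v : ℝ × EuclideanSpace ℝ (Fin n) → ℝ) (hv : ContDiff ℝ 1 v)
    (hv₀ : ∀ x ∈ X₀, 1 ≤ v (0, x))
    (hv₁ : ∀ x ∈ X₁, v (T, x) ≤ 0)
    (hlie : ∀ t ∈ Set.Icc (0 : ℝ) T, ∀ x ∈ X, ∀ u ∈ U,
      0 ≤ fderiv ℝ v (t, x) (1, u)) :
    ¬ ∃ (μ₀ μT : Measure (EuclideanSpace ℝ (Fin n)))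
        (μ : Measure (ℝ × EuclideanSpace ℝ (Fin n) × EuclideanSpace ℝ (Fin n))),
      IsProbabilityMeasure μ₀ ∧ IsFiniteMeasure μT ∧ IsFiniteMeasure μ ∧
      μ₀ X₀ᶜ = 0 ∧ μT X₁ᶜ = 0 ∧
      μ (Set.Icc (0 : ℝ) T ×ˢ X ×ˢ U)ᶜ = 0 ∧
      ∀ w : ℝ × EuclideanSpace ℝ (Fin n) → ℝ, ContDiff ℝ 1 w →
        ∫ x, w (T, x) ∂μT =
          ∫ x, w (0, x) ∂μ₀ + ∫ p, fderiv ℝ w (p.1, p.2.1) (1, p.2.2) ∂μ := by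
  rintro ⟨μ₀, μT, μ, hμ₀, -, -, hX₀, hX₁, hsupp, hweak⟩
  set w : ℝ × EuclideanSpace ℝ (Fin n) → ℝ := fun p => Real.arctan (v p)
  have hterminal : ∫ x, w (T, x) ∂μT ≤ 0 :=
    integral_nonpos_of_ae <| (ae_iff.2 hX₁).mono fun x hx =>
      Real.arctan_le_zero.2 (hv₁ x hx)
  have hoccupation : 0 ≤ ∫ p, fderiv ℝ w (p.1, p.2.1) (1, p.2.2) ∂μ :=
    integral_nonneg_of_ae <| (ae_iff.2 hsupp).mono fun p ⟨ht, hx, hu⟩ =>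
      Real.fderiv_arctan_comp_apply_nonneg (hv.differentiable one_ne_zero _)
        (hlie _ ht _ hx _ hu)
  have hinitial : Real.arctan 1 ≤ ∫ x, w (0, x) ∂μ₀ :=
    calc Real.arctan 1 = ∫ _, Real.arctan 1 ∂μ₀ := by simp
      _ ≤ ∫ x, w (0, x) ∂μ₀ :=
        integral_mono_ae (integrable_const _)
          (Real.integrable_arctan_comp
            (hv.continuous.comp (Continuous.prodMk_right 0)).aestronglyMeasurable)
          ((ae_iff.2 hX₀).mono fun x hx => Real.arctan_strictMono.monotone (hv₀ x hx))
  linarith [hweak w hv.arctan, Real.arctan_pos.2 one_pos]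

/-- Weak duality direction of Theorem 4.1: existence of a time-dependent
barrier function `v` rules out any triple of measures `(μ₀, μ_T, μ)`
satisfying the weak control Liouville equation. -/
theorem barrier_implies_measure_LP_infeasible {n : ℕ} (T : ℝ) (hT : 0 < T)
    (X₀ X₁ X U : Set (EuclideanSpace ℝ (Fin n)))
    (v : ℝ × EuclideanSpace ℝ (Fin n) → ℝ) (hv : ContDiff ℝ 1 v)
    (hv₀ : ∀ x ∈ X₀, 1 ≤ v (0, x))
    (hv₁ : ∀ x ∈ X₁, v (T, x) ≤ 0)
    (hlie : ∀ t ∈ Set.Icc (0 : ℝ) T, ∀ x ∈ X, ∀ u ∈ U,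
      0 ≤ fderiv ℝ v (t, x) (1, u)) :
    ¬ ∃ (μ₀ μT : Measure (EuclideanSpace ℝ (Fin n)))
        (μ : Measure (ℝ × EuclideanSpace ℝ (Fin n) × EuclideanSpace ℝ (Fin n))),
      IsProbabilityMeasure μ₀ ∧ IsFiniteMeasure μT ∧ IsFiniteMeasure μ ∧
      μ₀ X₀ᶜ = 0 ∧ μT X₁ᶜ = 0 ∧
      μ (Set.Icc (0 : ℝ) T ×ˢ X ×ˢ U)ᶜ = 0 ∧
      ∀ w : ℝ × EuclideanSpace ℝ (Fin n) → ℝ, ContDiff ℝ 1 w →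
        ∫ x, w (T, x) ∂μT =
          ∫ x, w (0, x) ∂μ₀ + ∫ p, fderiv ℝ w (p.1, p.2.1) (1, p.2.2) ∂μ :=
  barrier_implies_measure_LP_infeasible_general T X₀ X₁ X U v hv hv₀ hv₁ hlie
end

section
/- Let T > 0, let X₀, X₁, X ⊆ ℝ^n and U ⊆ ℝ^n be sets, with X₀ compact and nonempty. Suppose there exists a continuously differentiable v : ℝ × ℝ^n → ℝ with v(0,x) > 0 for all x ∈ X₀, v(T,x) ≤ 0 for all x ∈ X₁, and ∂_t v(t,x) + ⟨u, ∇_x v(t,x)⟩ ≥ 0 for all (t,x,u) ∈ [0,T] × X × U. Then there exists a continuously differentiable ṽ : ℝ × ℝ^n → ℝ satisfying the strict inequalities: ṽ(0,x) > 0 for all x ∈ X₀, ṽ(T,x) < 0 for all x ∈ X₁, and ∂_t ṽ(t,x) + ⟨u, ∇_x ṽ(t,x)⟩ > 0 for all (t,x,u) ∈ [0,T] × X × U. In particular, one may take ṽ(t,x) = v(t,x) − ε(1 − t/(2T)) for any ε with 0 < ε < min_{x ∈ X₀} v(0,x). -/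
/-!
Subtracting the ramp `ε (1 - t / (2T))` from `v` lowers `v (0, ·)` by `ε`, lowers `v (T, ·)` by `ε / 2`
and raises every derivative `Dv (t, x) (1, u)` by `ε / (2T)`. As `v (0, ·)` is continuous and positive
on the compact set `X₀`, it is bounded below there by some `m > 0`, and `ε = m / 2` makes all three
barrier conditions strict.
-/

open Set

section TimeRamp

variable {E : Type*} [NormedAddCommGroup E] [NormedSpace ℝ E]

def IsStrictBarrier (T : ℝ) (X₀ X₁ X U : Set E) (w : ℝ × E → ℝ) : Prop :=
  (∀ x ∈ X₀, 0 < w (0, x)) ∧ (∀ x ∈ X₁, w (T, x) < 0) ∧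
    ∀ t ∈ Icc (0 : ℝ) T, ∀ x ∈ X, ∀ u ∈ U, 0 < fderiv ℝ w (t, x) (1, u)

theorem contDiff_sub_time_ramp {v : ℝ × E → ℝ} (hv : ContDiff ℝ 1 v) (ε T : ℝ) :
    ContDiff ℝ 1 fun p : ℝ × E => v p - ε * (1 - p.1 / T) := by
  fun_prop

theorem fderiv_sub_time_ramp_apply {v : ℝ × E → ℝ} {p : ℝ × E} (hv : DifferentiableAt ℝ v p)
    (ε T : ℝ) (u : E) :
    fderiv ℝ (fun q : ℝ × E => v q - ε * (1 - q.1 / T)) p (1, u) = fderiv ℝ v p (1, u) + ε / T := by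
  have hramp : HasFDerivAt (fun q : ℝ × E => ε * (1 - q.1 / T))
      (ε • -(T⁻¹ • ContinuousLinearMap.fst ℝ ℝ E)) p := by
    simpa only [div_eq_mul_inv] using
      ((hasFDerivAt_fst (p := p) (𝕜 := ℝ)).mul_const T⁻¹ |>.const_sub 1).const_mul ε
  rw [(hv.hasFDerivAt.fun_sub hramp).fderiv]
  simp [div_eq_mul_inv]

theorem isStrictBarrier_sub_time_ramp {T ε : ℝ} (hT : 0 < T) (hε : 0 < ε) {X₀ X₁ X U : Set E}
    {v : ℝ × E → ℝ} (hv : Differentiable ℝ v) (hv₀ : ∀ x ∈ X₀, ε < v (0, x))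
    (hv₁ : ∀ x ∈ X₁, v (T, x) ≤ 0)
    (hlie : ∀ t ∈ Icc (0 : ℝ) T, ∀ x ∈ X, ∀ u ∈ U, 0 ≤ fderiv ℝ v (t, x) (1, u)) :
    IsStrictBarrier T X₀ X₁ X U fun p => v p - ε * (1 - p.1 / (2 * T)) := by
  refine ⟨fun x hx => ?_, fun x hx => ?_, fun t ht x hx u hu => ?_⟩
  · simpa using hv₀ x hx
  · have hhalf : T / (2 * T) = 1 / 2 := by field_simp
    simp only [hhalf]
    linarith [hv₁ x hx]
  · rw [fderiv_sub_time_ramp_apply (hv _)]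
    linarith [hlie t ht x hx u hu, div_pos hε (mul_pos two_pos hT)]

end TimeRamp

theorem barrier_strict_reformulation_general {n : ℕ} (T : ℝ) (hT : 0 < T)
    (X₀ X₁ X U : Set (EuclideanSpace ℝ (Fin n)))
    (hX₀c : IsCompact X₀)
    (v : ℝ × EuclideanSpace ℝ (Fin n) → ℝ) (hv : ContDiff ℝ 1 v)
    (hv₀ : ∀ x ∈ X₀, 0 < v (0, x))
    (hv₁ : ∀ x ∈ X₁, v (T, x) ≤ 0)
    (hlie : ∀ t ∈ Set.Icc (0 : ℝ) T, ∀ x ∈ X, ∀ u ∈ U,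
      0 ≤ fderiv ℝ v (t, x) (1, u)) :
    (∃ w : ℝ × EuclideanSpace ℝ (Fin n) → ℝ, ContDiff ℝ 1 w ∧
      (∀ x ∈ X₀, 0 < w (0, x)) ∧
      (∀ x ∈ X₁, w (T, x) < 0) ∧
      (∀ t ∈ Set.Icc (0 : ℝ) T, ∀ x ∈ X, ∀ u ∈ U,
        0 < fderiv ℝ w (t, x) (1, u))) ∧
    (∀ ε : ℝ, 0 < ε → (∀ x ∈ X₀, ε < v (0, x)) →
      (∀ x ∈ X₀, 0 < (fun p : ℝ × EuclideanSpace ℝ (Fin n) =>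
          v p - ε * (1 - p.1 / (2 * T))) (0, x)) ∧
      (∀ x ∈ X₁, (fun p : ℝ × EuclideanSpace ℝ (Fin n) =>
          v p - ε * (1 - p.1 / (2 * T))) (T, x) < 0) ∧
      (∀ t ∈ Set.Icc (0 : ℝ) T, ∀ x ∈ X, ∀ u ∈ U,
        0 < fderiv ℝ (fun p : ℝ × EuclideanSpace ℝ (Fin n) =>
          v p - ε * (1 - p.1 / (2 * T))) (t, x) (1, u))) := by
  have hvd := hv.differentiable one_ne_zero
  obtain ⟨m, hm, hmv⟩ := hX₀c.exists_forall_le'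
    (hv.continuous.comp (Continuous.prodMk_right 0)).continuousOn hv₀
  refine ⟨⟨_, contDiff_sub_time_ramp hv (m / 2) (2 * T), ?_⟩,
    fun ε hε hεv => isStrictBarrier_sub_time_ramp hT hε hvd hεv hv₁ hlie⟩
  exact isStrictBarrier_sub_time_ramp hT (half_pos hm) hvd
    (fun x hx => (half_lt_self hm).trans_le (hmv x hx)) hv₁ hlie

/-- Lemma A.2 of the paper: the time-dependent barrier program may be
restricted to strict inequalities without conservatism.  Moreover the
specific shift `ṽ(t,x) = v(t,x) − ε(1 − t/(2T))` works for any
`0 < ε < min_{x ∈ X₀} v(0,x)`. -/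
theorem barrier_strict_reformulation {n : ℕ} (T : ℝ) (hT : 0 < T)
    (X₀ X₁ X U : Set (EuclideanSpace ℝ (Fin n)))
    (hX₀c : IsCompact X₀) (hX₀ne : X₀.Nonempty)
    (v : ℝ × EuclideanSpace ℝ (Fin n) → ℝ) (hv : ContDiff ℝ 1 v)
    (hv₀ : ∀ x ∈ X₀, 0 < v (0, x))
    (hv₁ : ∀ x ∈ X₁, v (T, x) ≤ 0)
    (hlie : ∀ t ∈ Set.Icc (0 : ℝ) T, ∀ x ∈ X, ∀ u ∈ U,
      0 ≤ fderiv ℝ v (t, x) (1, u)) :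
    (∃ w : ℝ × EuclideanSpace ℝ (Fin n) → ℝ, ContDiff ℝ 1 w ∧
      (∀ x ∈ X₀, 0 < w (0, x)) ∧
      (∀ x ∈ X₁, w (T, x) < 0) ∧
      (∀ t ∈ Set.Icc (0 : ℝ) T, ∀ x ∈ X, ∀ u ∈ U,
        0 < fderiv ℝ w (t, x) (1, u))) ∧
    (∀ ε : ℝ, 0 < ε → (∀ x ∈ X₀, ε < v (0, x)) →
      (∀ x ∈ X₀, 0 < (fun p : ℝ × EuclideanSpace ℝ (Fin n) =>
          v p - ε * (1 - p.1 / (2 * T))) (0, x)) ∧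
      (∀ x ∈ X₁, (fun p : ℝ × EuclideanSpace ℝ (Fin n) =>
          v p - ε * (1 - p.1 / (2 * T))) (T, x) < 0) ∧
      (∀ t ∈ Set.Icc (0 : ℝ) T, ∀ x ∈ X, ∀ u ∈ U,
        0 < fderiv ℝ (fun p : ℝ × EuclideanSpace ℝ (Fin n) =>
          v p - ε * (1 - p.1 / (2 * T))) (t, x) (1, u))) :=
  barrier_strict_reformulation_general T hT X₀ X₁ X U hX₀c v hv hv₀ hv₁ hlie
end

section
/- Let T > 0, let X ⊆ ℝ^n be a compact set, and let v : ℝ × ℝ^n → ℝ be continuously differentiable. Then the following are equivalent: (i) ∂_t v(t,x) + ⟨u, ∇_x v(t,x)⟩ > 0 for all (t,x) ∈ [0,T] × X and all u ∈ [-1,1]^n; (ii) there exist continuous functions ζᵢ⁺, ζᵢ⁻ : ℝ × ℝ^n → ℝ for i = 1,…,n that are nonnegative on [0,T] × X, satisfy ζᵢ⁺(t,x) − ζᵢ⁻(t,x) = ∂_{x_i} v(t,x) for all (t,x) ∈ [0,T] × X and i = 1,…,n, and such that ∂_t v(t,x) − Σᵢ₌₁ⁿ (ζᵢ⁺(t,x)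 + ζᵢ⁻(t,x)) > 0 for all (t,x) ∈ [0,T] × X. -/
/-!
On the box `[-1,1]^n` the linear form `u ↦ ∑ uᵢ aᵢ` attains its minimum `-∑ |aᵢ|` at
`u = -sign a`. Hence the Lie derivative condition holds at `(t, x)` iff
`∂ₜ v > ∑ |∂ᵢ v|`. The positive and negative parts of `∂ᵢ v` are continuous multipliers
realising this, and conversely nonnegative `ζᵢ⁺, ζᵢ⁻` with `ζᵢ⁺ - ζᵢ⁻ = ∂ᵢ v` satisfy
`|∂ᵢ v| ≤ ζᵢ⁺ + ζᵢ⁻`.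
-/

open Finset

theorem abs_sign_le_one {α : Type*} [Ring α] [LinearOrder α] [IsStrictOrderedRing α] (x : α) :
    |(SignType.sign x : α)| ≤ 1 := by
  rcases lt_trichotomy x 0 with hx | rfl | hx <;> simp [*]

section Box

variable {ι : Type*} [Fintype ι]

theorem neg_sum_abs_le_sum_mul {u : ι → ℝ} (hu : ∀ i, |u i| ≤ 1) (a : ι → ℝ) :
    -∑ i, |a i| ≤ ∑ i, u i * a i := by
  rw [← sum_neg_distrib]
  refine sum_le_sum fun i _ => neg_le_of_abs_le ?_
  rw [abs_mul]
  exact mul_le_of_le_one_left (abs_nonneg _) (hu i)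

theorem sum_neg_sign_mul_eq_neg_sum_abs (a : ι → ℝ) :
    ∑ i, -(SignType.sign (a i) : ℝ) * a i = -∑ i, |a i| := by
  simp only [neg_mul, sign_mul_self, sum_neg_distrib]

variable [DecidableEq ι]

theorem EuclideanSpace.sum_smul_single_one {𝕜 : Type*} [RCLike 𝕜] (u : EuclideanSpace 𝕜 ι) :
    ∑ i, u i • EuclideanSpace.single i (1 : 𝕜) = u := by
  simpa [EuclideanSpace.basisFun_apply] using (EuclideanSpace.basisFun ι 𝕜).sum_repr u

theorem ContinuousLinearMap.apply_one_eq_add_sum (L : ℝ × EuclideanSpace ℝ ι →L[ℝ] ℝ)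
    (u : EuclideanSpace ℝ ι) :
    L (1, u) = L (1, 0) + ∑ i, u i * L (0, EuclideanSpace.single i 1) := by
  have hsplit : ((1 : ℝ), u) = (1, 0) + ∑ i, u i • ((0 : ℝ), EuclideanSpace.single i (1 : ℝ)) := by
    refine Prod.ext ?_ ?_
    · simp [Prod.fst_sum]
    · simpa [Prod.snd_sum] using (EuclideanSpace.sum_smul_single_one u).symm
  rw [hsplit, map_add, map_sum]
  simp only [map_smul, smul_eq_mul]

theorem ContinuousLinearMap.forall_abs_le_one_pos_apply_iff
    (L : ℝ × EuclideanSpace ℝ ι →L[ℝ] ℝ) :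
    (∀ u : EuclideanSpace ℝ ι, (∀ i, |u i| ≤ 1) → 0 < L (1, u)) ↔
      ∑ i, |L (0, EuclideanSpace.single i 1)| < L (1, 0) := by
  constructor
  · intro h
    have hmin := h (WithLp.toLp 2 fun i => -SignType.sign (L (0, EuclideanSpace.single i 1)))
      fun i => by simpa only [PiLp.toLp_apply, abs_neg] using abs_sign_le_one _
    rw [L.apply_one_eq_add_sum] at hmin
    simp only [sum_neg_sign_mul_eq_neg_sum_abs] at hmin
    linarith
  · intro h u hu
    rw [L.apply_one_eq_add_sum]
    linarith [neg_sum_abs_le_sum_mul hu fun i => L (0, EuclideanSpace.single i 1)]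

end Box

theorem box_control_elimination_general {n : ℕ} (T : ℝ)
    (X : Set (EuclideanSpace ℝ (Fin n)))
    (v : ℝ × EuclideanSpace ℝ (Fin n) → ℝ) (hv : ContDiff ℝ 1 v) :
    (∀ t ∈ Set.Icc (0 : ℝ) T, ∀ x ∈ X, ∀ u : EuclideanSpace ℝ (Fin n),
      (∀ i, |u i| ≤ 1) → 0 < fderiv ℝ v (t, x) (1, u)) ↔
    (∃ ζp ζm : Fin n → ℝ × EuclideanSpace ℝ (Fin n) → ℝ,
      (∀ i, Continuous (ζp i)) ∧ (∀ i, Continuous (ζm i)) ∧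
      (∀ i, ∀ t ∈ Set.Icc (0 : ℝ) T, ∀ x ∈ X,
        0 ≤ ζp i (t, x) ∧ 0 ≤ ζm i (t, x)) ∧
      (∀ i, ∀ t ∈ Set.Icc (0 : ℝ) T, ∀ x ∈ X,
        ζp i (t, x) - ζm i (t, x) =
          fderiv ℝ v (t, x) (0, EuclideanSpace.single i 1)) ∧
      (∀ t ∈ Set.Icc (0 : ℝ) T, ∀ x ∈ X,
        0 < fderiv ℝ v (t, x) (1, 0) - ∑ i, (ζp i (t, x) + ζm i (t, x)))) := by
  set partialX : Fin n → ℝ × EuclideanSpace ℝ (Fin n) → ℝ :=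
    fun i p => fderiv ℝ v p (0, EuclideanSpace.single i 1)
  have hpartial : ∀ i, Continuous (partialX i) :=
    fun i => (hv.continuous_fderiv one_ne_zero).clm_apply continuous_const
  simp only [ContinuousLinearMap.forall_abs_le_one_pos_apply_iff, sub_pos]
  constructor
  · intro h
    refine ⟨fun i p => (partialX i p)⁺, fun i p => (partialX i p)⁻,
      fun i => continuous_posPart.comp (hpartial i), fun i => continuous_negPart.comp (hpartial i),
      fun i t _ x _ => ⟨posPart_nonneg (partialX i (t, x)), negPart_nonneg (partialX i (t, x))⟩,
      fun i t _ x _ => posPart_sub_negPart (partialX i (t, x)), fun t ht x hx => ?_⟩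
    simpa only [posPart_add_negPart] using h t ht x hx
  · rintro ⟨ζp, ζm, -, -, hnonneg, hdiff, hpos⟩ t ht x hx
    refine (sum_le_sum fun i _ => ?_).trans_lt (hpos t ht x hx)
    obtain ⟨hp, hm⟩ := hnonneg i t ht x hx
    rw [← hdiff i t ht x hx]
    exact (abs_sub _ _).trans_eq (by rw [abs_of_nonneg hp, abs_of_nonneg hm])

/-- Theorem 5.1 of the paper: for the unit-box control set `U = [-1,1]^n`,
the strict Lie derivative constraint of the time-dependent barrier program
for `ẋ = u` is equivalent to a control-eliminated form with continuous
nonnegative multipliers `ζᵢ⁺, ζᵢ⁻` whose differences recover `∂_{x_i} v`. -/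
theorem box_control_elimination {n : ℕ} (T : ℝ) (hT : 0 < T)
    (X : Set (EuclideanSpace ℝ (Fin n))) (hX : IsCompact X)
    (v : ℝ × EuclideanSpace ℝ (Fin n) → ℝ) (hv : ContDiff ℝ 1 v) :
    (∀ t ∈ Set.Icc (0 : ℝ) T, ∀ x ∈ X, ∀ u : EuclideanSpace ℝ (Fin n),
      (∀ i, |u i| ≤ 1) → 0 < fderiv ℝ v (t, x) (1, u)) ↔
    (∃ ζp ζm : Fin n → ℝ × EuclideanSpace ℝ (Fin n) → ℝ,
      (∀ i, Continuous (ζp i)) ∧ (∀ i, Continuous (ζm i)) ∧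
      (∀ i, ∀ t ∈ Set.Icc (0 : ℝ) T, ∀ x ∈ X,
        0 ≤ ζp i (t, x) ∧ 0 ≤ ζm i (t, x)) ∧
      (∀ i, ∀ t ∈ Set.Icc (0 : ℝ) T, ∀ x ∈ X,
        ζp i (t, x) - ζm i (t, x) =
          fderiv ℝ v (t, x) (0, EuclideanSpace.single i 1)) ∧
      (∀ t ∈ Set.Icc (0 : ℝ) T, ∀ x ∈ X,
        0 < fderiv ℝ v (t, x) (1, 0) - ∑ i, (ζp i (t, x) + ζm i (t, x)))) :=
  box_control_elimination_general T X v hv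
end

section
/- Let T > 0 and let X₀, X₁, X ⊆ ℝ^n be sets with X₀ nonempty and compact, X₀ ⊆ X, and X₁ ⊆ X. Let ṽ : ℝ × ℝ^n → ℝ be continuously differentiable with ṽ(0,x) > 0 for all x ∈ X₀, ṽ(T,x) < 0 for all x ∈ X₁, and ∂_t ṽ(t,x) + ⟨u, ∇_x ṽ(t,x)⟩ > 0 for all (t,x,u) ∈ [0,T] × X × [-1,1]^n. Let w : ℝ × ℝ^n → ℝ be continuously differentiable and let η, δ > 0 be such that: |w(t,x) − ṽ(t,x)| ≤ η for all (t,x) ∈ [0,T] × X; |∂_t w(t,x) + ⟨u, ∇_x w(t,x)⟩ − ∂_t ṽ(t,x) − ⟨u, ∇_x ṽ(t,x)⟩| ≤ η for all (t,x,u) ∈ [0,T] × X × [-1,1]^n; η + δ < min_{x ∈ X₀} ṽ(0,x); and η < min(1, 1/T)·δ/2. Then the function V(t,x) := w(t,x) − δ(1 − t/(2T)) satisfies V(0,x) > 0 for all x ∈ X₀, V(T,x) < 0 for all x ∈ X₁, and ∂_t V(t,x) + ⟨u, ∇_x V(t,x)⟩ > 0 for all (t,x,u) ∈ [0,T] ×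 X × [-1,1]^n. -/
/-!
Shifting `w` by `δ (1 - t / (2T))` costs `δ` at `t = 0`, only `δ / 2` at `t = T`, and adds
`δ / (2T)` to the Lie derivative. The approximation error `η` is below each of these margins,
so the three strict inequalities satisfied by `ṽ` survive the passage to `V`.
-/

theorem lt_half_and_lt_div_two_mul_of_lt_min {T η δ : ℝ} (hδ : 0 ≤ δ)
    (h : η < min 1 (1 / T) * δ / 2) : η < δ / 2 ∧ η < δ / (2 * T) := by
  have h₁ := mul_le_mul_of_nonneg_right (min_le_left 1 (1 / T)) hδ
  have h₂ := mul_le_mul_of_nonneg_right (min_le_right 1 (1 / T)) hδ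
  have hT : 1 / T * δ / 2 = δ / (2 * T) := by ring
  constructor <;> linarith

theorem fderiv_sub_mul_one_sub_fst_div {F : Type*} [NormedAddCommGroup F] [NormedSpace ℝ F]
    {w : ℝ × F → ℝ} {p : ℝ × F} (hw : DifferentiableAt ℝ w p) (δ c : ℝ) (v : ℝ × F) :
    fderiv ℝ (fun q : ℝ × F => w q - δ * (1 - q.1 / c)) p v = fderiv ℝ w p v + δ / c * v.1 := by
  simp only [div_eq_mul_inv]
  rw [fderiv_fun_sub hw (by fun_prop), fderiv_const_mul (by fun_prop), fderiv_const_sub,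
    fderiv_mul_const differentiableAt_fst, fderiv_fst]
  simp only [smul_neg, sub_neg_eq_add, add_apply, smul_apply, ContinuousLinearMap.coe_fst',
    smul_eq_mul]
  ring

theorem approximation_shift_barrier_general {n : ℕ} (T : ℝ) (hT : 0 < T)
    (X₀ X₁ X : Set (EuclideanSpace ℝ (Fin n)))
    (hX₀X : X₀ ⊆ X) (hX₁X : X₁ ⊆ X)
    (vt : ℝ × EuclideanSpace ℝ (Fin n) → ℝ)
    (hvt₁ : ∀ x ∈ X₁, vt (T, x) < 0)
    (hvtlie : ∀ t ∈ Set.Icc (0 : ℝ) T, ∀ x ∈ X, ∀ u : EuclideanSpace ℝ (Fin n),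
      (∀ i, |u i| ≤ 1) → 0 < fderiv ℝ vt (t, x) (1, u))
    (w : ℝ × EuclideanSpace ℝ (Fin n) → ℝ) (hw : ContDiff ℝ 1 w)
    (η δ : ℝ) (hδ : 0 < δ)
    (happrox : ∀ t ∈ Set.Icc (0 : ℝ) T, ∀ x ∈ X, |w (t, x) - vt (t, x)| ≤ η)
    (hliapprox : ∀ t ∈ Set.Icc (0 : ℝ) T, ∀ x ∈ X, ∀ u : EuclideanSpace ℝ (Fin n),
      (∀ i, |u i| ≤ 1) →
      |fderiv ℝ w (t, x) (1, u) - fderiv ℝ vt (t, x) (1, u)| ≤ η)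
    (hmin : ∀ x ∈ X₀, η + δ < vt (0, x))
    (hηδ : η < min 1 (1 / T) * δ / 2) :
    (∀ x ∈ X₀, 0 < (fun q : ℝ × EuclideanSpace ℝ (Fin n) =>
        w q - δ * (1 - q.1 / (2 * T))) (0, x)) ∧
    (∀ x ∈ X₁, (fun q : ℝ × EuclideanSpace ℝ (Fin n) =>
        w q - δ * (1 - q.1 / (2 * T))) (T, x) < 0) ∧
    (∀ t ∈ Set.Icc (0 : ℝ) T, ∀ x ∈ X, ∀ u : EuclideanSpace ℝ (Fin n),
      (∀ i, |u i| ≤ 1) →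
      0 < fderiv ℝ (fun q : ℝ × EuclideanSpace ℝ (Fin n) =>
        w q - δ * (1 - q.1 / (2 * T))) (t, x) (1, u)) := by
  obtain ⟨hη_half, hη_time⟩ := lt_half_and_lt_div_two_mul_of_lt_min hδ.le hηδ
  refine ⟨fun x hx => ?_, fun x hx => ?_, fun t ht x hx u hu => ?_⟩
  · have hw₀ := (abs_le.mp (happrox 0 ⟨le_rfl, hT.le⟩ x (hX₀X hx))).1
    have hv₀ := hmin x hx
    simp only [zero_div, sub_zero, mul_one]
    linarith
  · have hwT := (abs_le.mp (happrox T ⟨hT.le, le_rfl⟩ x (hX₁X hx))).2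
    have hvT := hvt₁ x hx
    have hhalf : T / (2 * T) = 1 / 2 := by field_simp
    simp only [hhalf]
    linarith
  · rw [fderiv_sub_mul_one_sub_fst_div ((hw.differentiable one_ne_zero) (t, x))]
    have hwlie := (abs_le.mp (hliapprox t ht x hx u hu)).1
    have hvlie := hvtlie t ht x hx u hu
    simp only [mul_one]
    linarith

/-- Quantitative shift step of Theorem B.2: if `w` approximates a strict
barrier `ṽ` within `η` in both value and Lie derivative over the relevant
compact sets, and the tolerances satisfy `η + δ < min_{X₀} ṽ(0,·)` and
`η < min(1, 1/T)·δ/2`, then `V(t,x) = w(t,x) − δ(1 − t/(2T))` is again a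
strict barrier function. -/
theorem approximation_shift_barrier {n : ℕ} (T : ℝ) (hT : 0 < T)
    (X₀ X₁ X : Set (EuclideanSpace ℝ (Fin n)))
    (hX₀c : IsCompact X₀) (hX₀ne : X₀.Nonempty) (hX₀X : X₀ ⊆ X) (hX₁X : X₁ ⊆ X)
    (vt : ℝ × EuclideanSpace ℝ (Fin n) → ℝ) (hvt : ContDiff ℝ 1 vt)
    (hvt₀ : ∀ x ∈ X₀, 0 < vt (0, x))
    (hvt₁ : ∀ x ∈ X₁, vt (T, x) < 0)
    (hvtlie : ∀ t ∈ Set.Icc (0 : ℝ) T, ∀ x ∈ X, ∀ u : EuclideanSpace ℝ (Fin n),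
      (∀ i, |u i| ≤ 1) → 0 < fderiv ℝ vt (t, x) (1, u))
    (w : ℝ × EuclideanSpace ℝ (Fin n) → ℝ) (hw : ContDiff ℝ 1 w)
    (η δ : ℝ) (hη : 0 < η) (hδ : 0 < δ)
    (happrox : ∀ t ∈ Set.Icc (0 : ℝ) T, ∀ x ∈ X, |w (t, x) - vt (t, x)| ≤ η)
    (hliapprox : ∀ t ∈ Set.Icc (0 : ℝ) T, ∀ x ∈ X, ∀ u : EuclideanSpace ℝ (Fin n),
      (∀ i, |u i| ≤ 1) →
      |fderiv ℝ w (t, x) (1, u) - fderiv ℝ vt (t, x) (1, u)| ≤ η)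
    (hmin : ∀ x ∈ X₀, η + δ < vt (0, x))
    (hηδ : η < min 1 (1 / T) * δ / 2) :
    (∀ x ∈ X₀, 0 < (fun q : ℝ × EuclideanSpace ℝ (Fin n) =>
        w q - δ * (1 - q.1 / (2 * T))) (0, x)) ∧
    (∀ x ∈ X₁, (fun q : ℝ × EuclideanSpace ℝ (Fin n) =>
        w q - δ * (1 - q.1 / (2 * T))) (T, x) < 0) ∧
    (∀ t ∈ Set.Icc (0 : ℝ) T, ∀ x ∈ X, ∀ u : EuclideanSpace ℝ (Fin n),
      (∀ i, |u i| ≤ 1) →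
      0 < fderiv ℝ (fun q : ℝ × EuclideanSpace ℝ (Fin n) =>
        w q - δ * (1 - q.1 / (2 * T))) (t, x) (1, u)) :=
  approximation_shift_barrier_general T hT X₀ X₁ X hX₀X hX₁X vt hvt₁ hvtlie w hw η δ hδ happrox
    hliapprox hmin hηδ
end

section
/- Let T > 0 and let X ⊆ ℝ^n be a compact set. Let v be a polynomial function of the n+1 real variables (t, x₁, …, x_n) such that ∂_t v(t,x) + ⟨u, ∇_x v(t,x)⟩ > 0 for all (t,x,u) ∈ [0,T] × X × [-1,1]^n. Then there exist polynomial functions ζᵢ⁺, ζᵢ⁻ of (t, x₁, …, x_n) for i = 1, …, n such that: ζᵢ⁺(t,x) ≥ 0 and ζᵢ⁻(t,x) ≥ 0 for all (t,x) ∈ [0,T] × X; ζᵢ⁺ − ζᵢ⁻ = ∂_{x_i} v identically (as polynomials) for each i; and ∂_t v(t,x) − Σᵢ₌₁ⁿ (ζᵢ⁺(t,x) + ζᵢ⁻(t,x)) > 0 for all (t,x) ∈ [0,T] × X. -/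
/-! Taking `u = -sign (∇ₓ v)` shows that `∂ₜ v - ∑ᵢ |∂ᵢ v| > 0` on the compact image of
`[0, T] × X`, so it is at least some `ε > 0` there. Weierstrass approximation of `|·|` on a
bounded interval gives polynomials `Qᵢ` with `|∂ᵢ v| ≤ Qᵢ ≤ |∂ᵢ v| + ε / (n + 1)` on that set,
and `ζᵢ± = (Qᵢ ± ∂ᵢ v) / 2` are the required multipliers. -/

open MvPolynomial

theorem sum_abs_lt_of_forall_abs_le_one {ι : Type*} [Fintype ι] {a : ℝ} {b : ι → ℝ}
    (h : ∀ u : ι → ℝ, (∀ i, |u i| ≤ 1) → 0 < a + ∑ i, u i * b i) :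
    ∑ i, |b i| < a := by
  have hu : ∀ i, |(-(SignType.sign (b i) : ℝ))| ≤ 1 := fun i => by
    cases SignType.sign (b i) <;> simp
  simpa [neg_mul, sign_mul_self, ← sub_eq_add_neg] using h _ hu

theorem MvPolynomial.eval_polynomial_aeval {R σ : Type*} [CommSemiring R] (y : σ → R)
    (d : MvPolynomial σ R) (q : Polynomial R) :
    eval y (Polynomial.aeval d q) = q.eval (eval y d) :=
  (Polynomial.aeval_algHom_apply (aeval y) d q).symm

theorem exists_mvPolynomial_abs_le_le_abs_add {σ : Type*} {S : Set (σ → ℝ)} (hS : IsCompact S)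
    (d : MvPolynomial σ ℝ) {δ : ℝ} (hδ : 0 < δ) :
    ∃ Q : MvPolynomial σ ℝ, ∀ y ∈ S, |eval y d| ≤ eval y Q ∧ eval y Q ≤ |eval y d| + δ := by
  obtain ⟨M, hM⟩ := hS.exists_bound_of_continuousOn (continuous_eval d).continuousOn
  obtain ⟨q, hq⟩ := exists_polynomial_near_of_continuousOn (-M) M (fun s => |s|)
    continuous_abs.continuousOn (δ / 2) (half_pos hδ)
  refine ⟨Polynomial.aeval d q + C (δ / 2), fun y hy => ?_⟩
  have hnear := abs_lt.1 (hq (eval y d) (abs_le.1 (hM y hy)))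
  simp only [map_add, eval_C, eval_polynomial_aeval]
  constructor <;> linarith [hnear.1, hnear.2]

theorem exists_mvPolynomial_abs_le_sum_lt {σ ι : Type*} [Fintype ι] {S : Set (σ → ℝ)}
    (hS : IsCompact S) (a : MvPolynomial σ ℝ) (d : ι → MvPolynomial σ ℝ)
    (h : ∀ y ∈ S, ∑ i, |eval y (d i)| < eval y a) :
    ∃ Q : ι → MvPolynomial σ ℝ, (∀ i, ∀ y ∈ S, |eval y (d i)| ≤ eval y (Q i)) ∧
      ∀ y ∈ S, ∑ i, eval y (Q i) < eval y a := by
  obtain ⟨ε, hε, hmargin⟩ := hS.exists_forall_le'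
    (f := fun y => eval y a - ∑ i, |eval y (d i)|)
    ((continuous_eval a).sub
      (continuous_finsetSum _ fun i _ => (continuous_eval (d i)).abs)).continuousOn
    (a := 0) fun y hy => sub_pos.2 (h y hy)
  set δ := ε / (Fintype.card ι + 1)
  have hδ : Fintype.card ι * δ < ε := by
    rw [mul_div_assoc', div_lt_iff₀ (by positivity)]
    linarith
  choose Q hQ using fun i =>
    exists_mvPolynomial_abs_le_le_abs_add hS (d i) (by positivity : 0 < δ)
  refine ⟨Q, fun i y hy => (hQ i y hy).1, fun y hy => ?_⟩
  calc ∑ i, eval y (Q i) ≤ ∑ i, (|eval y (d i)| + δ) :=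
        Finset.sum_le_sum fun i _ => (hQ i y hy).2
    _ = ∑ i, |eval y (d i)| + Fintype.card ι * δ := by
        rw [Finset.sum_add_distrib, Finset.sum_const, Finset.card_univ, nsmul_eq_mul]
    _ < eval y a := by linarith [hmargin y hy]

theorem exists_mvPolynomial_split_sum_lt {σ ι : Type*} [Fintype ι] {S : Set (σ → ℝ)}
    (hS : IsCompact S) (a : MvPolynomial σ ℝ) (d : ι → MvPolynomial σ ℝ)
    (h : ∀ y ∈ S, ∑ i, |eval y (d i)| < eval y a) :
    ∃ ζp ζm : ι → MvPolynomial σ ℝ,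
      (∀ i, ∀ y ∈ S, 0 ≤ eval y (ζp i) ∧ 0 ≤ eval y (ζm i)) ∧
      (∀ i, ζp i - ζm i = d i) ∧
      ∀ y ∈ S, ∑ i, (eval y (ζp i) + eval y (ζm i)) < eval y a := by
  obtain ⟨Q, habs, hsum⟩ := exists_mvPolynomial_abs_le_sum_lt hS a d h
  refine ⟨fun i => (2⁻¹ : ℝ) • (Q i + d i), fun i => (2⁻¹ : ℝ) • (Q i - d i),
    fun i y hy => ?_, fun i => ?_, fun y hy => ?_⟩
  · have := abs_le.1 (habs i y hy)
    simp only [smul_eval, map_add, map_sub]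
    constructor <;> nlinarith
  · module
  · convert hsum y hy using 2 with i
    simp only [smul_eval, map_add, map_sub]
    ring

theorem polynomial_multipliers_exist_general {n : ℕ} (T : ℝ)
    (X : Set (EuclideanSpace ℝ (Fin n))) (hX : IsCompact X)
    (p : MvPolynomial (Fin (n + 1)) ℝ)
    (hlie : ∀ t ∈ Set.Icc (0 : ℝ) T, ∀ x ∈ X, ∀ u : EuclideanSpace ℝ (Fin n),
      (∀ i, |u i| ≤ 1) →
      0 < MvPolynomial.eval (Fin.cons t (fun i => x i)) (MvPolynomial.pderiv 0 p) +
        ∑ i : Fin n, u i *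
          MvPolynomial.eval (Fin.cons t (fun j => x j)) (MvPolynomial.pderiv i.succ p)) :
    ∃ ζp ζm : Fin n → MvPolynomial (Fin (n + 1)) ℝ,
      (∀ i : Fin n, ∀ t ∈ Set.Icc (0 : ℝ) T, ∀ x ∈ X,
        0 ≤ MvPolynomial.eval (Fin.cons t (fun j => x j)) (ζp i) ∧
        0 ≤ MvPolynomial.eval (Fin.cons t (fun j => x j)) (ζm i)) ∧
      (∀ i : Fin n, ζp i - ζm i = MvPolynomial.pderiv i.succ p) ∧
      (∀ t ∈ Set.Icc (0 : ℝ) T, ∀ x ∈ X,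
        0 < MvPolynomial.eval (Fin.cons t (fun j => x j)) (MvPolynomial.pderiv 0 p) -
          ∑ i : Fin n,
            (MvPolynomial.eval (Fin.cons t (fun j => x j)) (ζp i) +
             MvPolynomial.eval (Fin.cons t (fun j => x j)) (ζm i))) := by
  set φ : ℝ × EuclideanSpace ℝ (Fin n) → (Fin (n + 1) → ℝ) := fun q => Fin.cons q.1 q.2
  have hφ : Continuous φ := Continuous.finCons (A := fun _ => ℝ) continuous_fst
    ((PiLp.continuous_ofLp 2 _).comp continuous_snd)
  have hS : IsCompact (φ '' (Set.Icc 0 T ×ˢ X)) := (isCompact_Icc.prod hX).image hφ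
  have hmem {t x} (ht : t ∈ Set.Icc 0 T) (hx : x ∈ X) : φ (t, x) ∈ φ '' (Set.Icc 0 T ×ˢ X) :=
    Set.mem_image_of_mem φ (Set.mk_mem_prod ht hx)
  have hmargin : ∀ y ∈ φ '' (Set.Icc 0 T ×ˢ X),
      ∑ i : Fin n, |eval y (pderiv i.succ p)| < eval y (pderiv 0 p) := by
    rintro _ ⟨⟨t, x⟩, ⟨ht, hx⟩, rfl⟩
    exact sum_abs_lt_of_forall_abs_le_one fun u hu => hlie t ht x hx (WithLp.toLp 2 u) hu
  obtain ⟨ζp, ζm, hnonneg, hsplit, hsum⟩ := exists_mvPolynomial_split_sum_lt hS _ _ hmargin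
  exact ⟨ζp, ζm, fun i t ht x hx => hnonneg i _ (hmem ht hx), hsplit,
    fun t ht x hx => sub_pos.2 (hsum _ (hmem ht hx))⟩

/-- Theorem B.3 of the paper: for a polynomial barrier `v` (in the variables
`t, x₁, …, x_n`, with variable `0` playing the role of `t`) whose Lie
derivative `∂_t v + ⟨u, ∇_x v⟩` is strictly positive on
`[0,T] × X × [-1,1]^n`, the nonnegative multipliers `ζᵢ⁺, ζᵢ⁻` in the
control-eliminated form may be chosen to be polynomials with
`ζᵢ⁺ − ζᵢ⁻ = ∂_{x_i} v` identically as polynomials. -/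
theorem polynomial_multipliers_exist {n : ℕ} (T : ℝ) (hT : 0 < T)
    (X : Set (EuclideanSpace ℝ (Fin n))) (hX : IsCompact X)
    (p : MvPolynomial (Fin (n + 1)) ℝ)
    (hlie : ∀ t ∈ Set.Icc (0 : ℝ) T, ∀ x ∈ X, ∀ u : EuclideanSpace ℝ (Fin n),
      (∀ i, |u i| ≤ 1) →
      0 < MvPolynomial.eval (Fin.cons t (fun i => x i)) (MvPolynomial.pderiv 0 p) +
        ∑ i : Fin n, u i *
          MvPolynomial.eval (Fin.cons t (fun j => x j)) (MvPolynomial.pderiv i.succ p)) :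
    ∃ ζp ζm : Fin n → MvPolynomial (Fin (n + 1)) ℝ,
      (∀ i : Fin n, ∀ t ∈ Set.Icc (0 : ℝ) T, ∀ x ∈ X,
        0 ≤ MvPolynomial.eval (Fin.cons t (fun j => x j)) (ζp i) ∧
        0 ≤ MvPolynomial.eval (Fin.cons t (fun j => x j)) (ζm i)) ∧
      (∀ i : Fin n, ζp i - ζm i = MvPolynomial.pderiv i.succ p) ∧
      (∀ t ∈ Set.Icc (0 : ℝ) T, ∀ x ∈ X,
        0 < MvPolynomial.eval (Fin.cons t (fun j => x j)) (MvPolynomial.pderiv 0 p) -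
          ∑ i : Fin n,
            (MvPolynomial.eval (Fin.cons t (fun j => x j)) (ζp i) +
             MvPolynomial.eval (Fin.cons t (fun j => x j)) (ζm i))) :=
  polynomial_multipliers_exist_general T X hX p hlie
end

section
/- Let n ≥ 1, let U ⊆ ℝ^n be a set with 0 in its topological interior, let X ⊆ ℝ^n be a set with nonempty topological interior, and let X₀, X₁ ⊆ X be nonempty sets. Then there is no polynomial function v : ℝ^n → ℝ (a polynomial in x₁, …, x_n with real coefficients) satisfying simultaneously: v(x) ≥ 1 for all x ∈ X₀; v(x) ≤ 0 for all x ∈ X₁; and ⟨u, ∇v(x)⟩ ≥ 0 for all x ∈ X and all u ∈ U. -/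
open scoped RealInnerProductSpace
open Filter Topology

/-!
A nonnegative linear functional on a neighbourhood of `0` vanishes, so the gradient condition
forces `∇v = 0` on the interior of `X`. A polynomial is analytic, and an analytic function that is
locally constant near one point is constant on all of `ℝⁿ` by the identity theorem; no constant is
both `≥ 1` and `≤ 0`.
-/

theorem ContinuousLinearMap.eq_zero_of_nonneg_on_nhds_zero {E : Type*} [AddCommGroup E]
    [TopologicalSpace E] [Module ℝ E] [ContinuousSMul ℝ E] {U : Set E} (hU : U ∈ 𝓝 0)
    (ℓ : E →L[ℝ] ℝ) (hℓ : ∀ u ∈ U, 0 ≤ ℓ u) : ℓ = 0 := by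
  have h_nonneg : ∀ w, 0 ≤ ℓ w := fun w => by
    have h_small : ∀ᶠ t in 𝓝[>] (0 : ℝ), t • w ∈ U := nhdsWithin_le_nhds <|
      (continuous_id.smul continuous_const).tendsto' 0 0 (zero_smul ℝ w) hU
    obtain ⟨t, htU, ht⟩ := (h_small.and self_mem_nhdsWithin).exists
    have := hℓ _ htU
    rw [map_smul, smul_eq_mul] at this
    exact nonneg_of_mul_nonneg_right this ht
  ext w
  exact le_antisymm (by simpa using h_nonneg (-w)) (h_nonneg w)

theorem AnalyticOnNhd.exists_eq_const_of_fderiv_eq_zero_on {E F : Type*}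
    [NormedAddCommGroup E] [NormedSpace ℝ E] [NormedAddCommGroup F] [NormedSpace ℝ F]
    {f : E → F} (hf : AnalyticOnNhd ℝ f Set.univ) {s : Set E} (hs : IsOpen s) (hne : s.Nonempty)
    (hf' : ∀ x ∈ s, fderiv ℝ f x = 0) : ∃ c, f = fun _ => c := by
  obtain ⟨x₀, hx₀⟩ := hne
  obtain ⟨r, hr, hball⟩ := Metric.isOpen_iff.1 hs x₀ hx₀
  refine ⟨f x₀, hf.eq_of_eventuallyEq analyticOnNhd_const (z₀ := x₀) ?_⟩
  filter_upwards [Metric.ball_mem_nhds x₀ hr] with x hx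
  exact Metric.isOpen_ball.is_const_of_fderiv_eq_zero (convex_ball x₀ r).isPreconnected
    (fun y _ => (hf y trivial).differentiableWithinAt) (fun y hy => hf' y (hball hy))
    hx (Metric.mem_ball_self hr)

theorem analyticOnNhd_eval_euclideanSpace {n : ℕ} (p : MvPolynomial (Fin n) ℝ) :
    AnalyticOnNhd ℝ (fun x : EuclideanSpace ℝ (Fin n) => MvPolynomial.eval (fun i => x i) p)
      Set.univ :=
  AnalyticOnNhd.eval_continuousLinearMap'
    (fun i => (EuclideanSpace.proj i : EuclideanSpace ℝ (Fin n) →L[ℝ] ℝ)) p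

theorem no_time_independent_polynomial_barrier_general {n : ℕ}
    (U X X₀ X₁ : Set (EuclideanSpace ℝ (Fin n)))
    (hU : (0 : EuclideanSpace ℝ (Fin n)) ∈ interior U)
    (hX : (interior X).Nonempty)
    (hX₀ne : X₀.Nonempty) (hX₁ne : X₁.Nonempty) :
    ¬ ∃ p : MvPolynomial (Fin n) ℝ,
      (∀ x ∈ X₀, 1 ≤ MvPolynomial.eval (fun i => x i) p) ∧
      (∀ x ∈ X₁, MvPolynomial.eval (fun i => x i) p ≤ 0) ∧
      (∀ x ∈ X, ∀ u ∈ U,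
        0 ≤ ⟪u, gradient (fun y : EuclideanSpace ℝ (Fin n) =>
          MvPolynomial.eval (fun i => y i) p) x⟫) := by
  rintro ⟨p, h_ge_one, h_nonpos, h_grad⟩
  have h_fderiv : ∀ x ∈ interior X,
      fderiv ℝ (fun y : EuclideanSpace ℝ (Fin n) => MvPolynomial.eval (fun i => y i) p) x = 0 :=
    fun x hx => ContinuousLinearMap.eq_zero_of_nonneg_on_nhds_zero (mem_interior_iff_mem_nhds.1 hU)
      _ fun u hu => by simpa [inner_gradient_right] using h_grad x (interior_subset hx) u hu
  obtain ⟨c, hc⟩ := (analyticOnNhd_eval_euclideanSpace p).exists_eq_const_of_fderiv_eq_zero_on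
    isOpen_interior hX h_fderiv
  obtain ⟨x₀, hx₀⟩ := hX₀ne
  obtain ⟨x₁, hx₁⟩ := hX₁ne
  have h₀ := h_ge_one x₀ hx₀
  have h₁ := h_nonpos x₁ hx₁
  rw [congrFun hc] at h₀ h₁
  linarith

/-- Infeasibility of the time-independent polynomial barrier program
(Section 4.2 of the paper): if `0` lies in the interior of the control set
`U`, `X` has nonempty interior and `X₀, X₁ ⊆ X` are nonempty, then no
polynomial `v` can satisfy `v ≥ 1` on `X₀`, `v ≤ 0` on `X₁`, and
`⟨u, ∇v(x)⟩ ≥ 0` on `X × U`. -/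
theorem no_time_independent_polynomial_barrier {n : ℕ} (hn : 1 ≤ n)
    (U X X₀ X₁ : Set (EuclideanSpace ℝ (Fin n)))
    (hU : (0 : EuclideanSpace ℝ (Fin n)) ∈ interior U)
    (hX : (interior X).Nonempty)
    (hX₀ne : X₀.Nonempty) (hX₁ne : X₁.Nonempty)
    (hX₀X : X₀ ⊆ X) (hX₁X : X₁ ⊆ X) :
    ¬ ∃ p : MvPolynomial (Fin n) ℝ,
      (∀ x ∈ X₀, 1 ≤ MvPolynomial.eval (fun i => x i) p) ∧
      (∀ x ∈ X₁, MvPolynomial.eval (fun i => x i) p ≤ 0) ∧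
      (∀ x ∈ X, ∀ u ∈ U,
        0 ≤ ⟪u, gradient (fun y : EuclideanSpace ℝ (Fin n) =>
          MvPolynomial.eval (fun i => y i) p) x⟫) :=
  no_time_independent_polynomial_barrier_general U X X₀ X₁ hU hX hX₀ne hX₁ne
end
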